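/- arXiv:1802.05708 — 6 statements merged into one kernel-verified Lean document; each statement's English description precedes it below -/
import Mathlib

section
/- Let f(x) = f(x₁,…,xₙ) := ∏_{i=1}^n (1 + 2cosh(2πx_i/√3))^{−1}, let C* := max_{z≥0}( z − z·tanh(z)/(1 + sech(z)/2) ) (C* ≈ 0.42479), and let K_α := {x ∈ ℝⁿ : ‖x‖₁ ≤ (1+C*)αn} be the ℓ₁ ball of radius (1+C*)αn. Then for any α > √3/(2π), ν_f(K_α) ≤ (2πα/√3)ⁿ · e^{−(2πα/√3 − 1)n}. -/
open Real

noncomputable section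


lemma aux_pos (s : ℝ) : (0:ℝ) < 1 + 2 * Real.cosh s := by
  have := Real.cosh_pos s; linarith

lemma phi_mono (Cstar : ℝ)
    (hub : ∀ s : ℝ, 0 < s → s - 2*s*Real.sinh s/(1+2*Real.cosh s) ≤ Cstar) :
    MonotoneOn (fun s => Real.log (1+2*Real.cosh s) - s + Cstar * Real.log s)
      (Set.Ioi (0:ℝ)) := by
  have hderiv : ∀ s : ℝ, 0 < s →
      HasDerivAt (fun s => Real.log (1+2*Real.cosh s) - s + Cstar * Real.log s)
        (2*Real.sinh s/(1+2*Real.cosh s) - 1 + Cstar * s⁻¹) s := by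
    intro s hs
    have h1 : HasDerivAt (fun s => 1+2*Real.cosh s) (2*Real.sinh s) s :=
      ((Real.hasDerivAt_cosh s).const_mul 2).const_add 1
    have h2 := h1.log (aux_pos s).ne'
    have h3 := (Real.hasDerivAt_log hs.ne').const_mul Cstar
    exact (h2.sub (hasDerivAt_id s)).add h3
  apply monotoneOn_of_deriv_nonneg (convex_Ioi 0)
  · exact fun s hs => (hderiv s hs).continuousAt.continuousWithinAt
  · rw [interior_Ioi]
    exact fun s hs => (hderiv s hs).differentiableAt.differentiableWithinAt
  · rw [interior_Ioi]
    intro s hs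
    have hs0 : (0:ℝ) < s := hs
    rw [(hderiv s hs).deriv]
    have h2 : 0 ≤ 2*s*Real.sinh s/(1+2*Real.cosh s) - s + Cstar := by
      have := hub s hs; linarith
    have hkey : 2 * Real.sinh s / (1+2*Real.cosh s) - 1 + Cstar * s⁻¹
        = (2*s*Real.sinh s/(1+2*Real.cosh s) - s + Cstar)/s := by
      field_simp [hs0.ne', (aux_pos s).ne']
    rw [hkey]
    exact div_nonneg h2 hs0.le

lemma percoord (Cstar : ℝ) (hC0 : 0 ≤ Cstar)
    (hub : ∀ s : ℝ, 0 < s → s - 2*s*Real.sinh s/(1+2*Real.cosh s) ≤ Cstar)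
    (u : ℝ) (hu : u ∈ Set.Ioc (0:ℝ) 1) (z : ℝ) :
    Real.log (1+2*Real.cosh (u*z)) ≤
      Real.log (1+2*Real.cosh z) - (1-u)*|z| - Cstar * Real.log u := by
  rcases eq_or_ne z 0 with rfl | hz
  · simp only [mul_zero, abs_zero]
    have : Cstar * Real.log u ≤ 0 :=
      mul_nonpos_of_nonneg_of_nonpos hC0 (Real.log_nonpos hu.1.le hu.2)
    linarith
  · set t := |z| with ht
    have htpos : 0 < t := abs_pos.mpr hz
    have h1 : Real.cosh (u*z) = Real.cosh (u*t) := by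
      rw [← Real.cosh_abs (u*z), ← Real.cosh_abs (u*t), abs_mul, abs_mul,
        abs_of_pos hu.1, abs_abs]
    have h2 : Real.cosh z = Real.cosh t := (Real.cosh_abs z).symm
    have hmem1 : u*t ∈ Set.Ioi (0:ℝ) := mul_pos hu.1 htpos
    have hle : u*t ≤ t := by nlinarith [hu.2, htpos]
    have := phi_mono Cstar hub hmem1 htpos hle
    simp only at this
    rw [Real.log_mul hu.1.ne' htpos.ne'] at this
    rw [h1, h2]
    nlinarith [this]

/-- `ν_f(K) := inf_{0<u≤1} sup_{x∉K} f(x)/(uⁿ f(ux))`, valued in `[0,∞]`. -/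
def nuf {n : ℕ} (f : EuclideanSpace ℝ (Fin n) → ℝ)
    (K : Set (EuclideanSpace ℝ (Fin n))) : ENNReal :=
  ⨅ u ∈ Set.Ioc (0 : ℝ) 1, ⨆ x ∈ Kᶜ, ENNReal.ofReal (f x / (u ^ n * f (u • x)))

/-- **Lemma 1**: with `f(x) = ∏ᵢ (1 + 2cosh(2πxᵢ/√3))⁻¹`,
`C* := max_{z≥0} (z − z·tanh(z)/(1 + sech(z)/2)) ≈ 0.42479`, and
`K_α := {x : ‖x‖₁ ≤ (1+C*)αn}`, one has, for every `α > √3/(2π)`,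
`ν_f(K_α) ≤ (2πα/√3)ⁿ · e^{−(2πα/√3 − 1)n}`. -/
theorem stmt_7 {n : ℕ}
    (f : EuclideanSpace ℝ (Fin n) → ℝ)
    (hf : ∀ x, f x = ∏ i, (1 + 2 * Real.cosh (2 * π * x i / Real.sqrt 3))⁻¹)
    (Cstar : ℝ)
    (hCstar : IsGreatest
      {y : ℝ | ∃ z : ℝ, 0 ≤ z ∧ y = z - z * Real.tanh z / (1 + (Real.cosh z)⁻¹ / 2)} Cstar)
    (α : ℝ) (hα : Real.sqrt 3 / (2 * π) < α)
    (Kα : Set (EuclideanSpace ℝ (Fin n)))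
    (hKα : Kα = {x | ∑ i, |x i| ≤ (1 + Cstar) * α * n}) :
    nuf f Kα ≤
      ENNReal.ofReal ((2 * π * α / Real.sqrt 3) ^ n *
        Real.exp (-(2 * π * α / Real.sqrt 3 - 1) * n)) := by
  have hπ : (0:ℝ) < π := Real.pi_pos
  have hs3 : (0:ℝ) < Real.sqrt 3 := Real.sqrt_pos.mpr (by norm_num)
  set β := 2 * π * α / Real.sqrt 3 with hβdef
  have h2π : (0:ℝ) < 2 * π := by linarith
  have h1 : Real.sqrt 3 < 2 * π * α := by
    rw [div_lt_iff₀ h2π] at hα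
    nlinarith [hα]
  have hβ1 : (1:ℝ) < β := (one_lt_div hs3).mpr h1
  have hβ0 : (0:ℝ) < β := by linarith
  set u := β⁻¹ with hudef
  have hu : u ∈ Set.Ioc (0:ℝ) 1 := ⟨inv_pos.mpr hβ0, inv_le_one_of_one_le₀ hβ1.le⟩
  -- Cstar facts
  have hC0 : 0 ≤ Cstar := hCstar.2 ⟨0, le_refl 0, by simp⟩
  have hub : ∀ s : ℝ, 0 < s → s - 2*s*Real.sinh s/(1+2*Real.cosh s) ≤ Cstar := by
    intro s hs
    have hmem : s - s * Real.tanh s / (1 + (Real.cosh s)⁻¹ / 2) ≤ Cstar :=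
      hCstar.2 ⟨s, hs.le, rfl⟩
    have hc := Real.cosh_pos s
    have heq : s - s * Real.tanh s / (1 + (Real.cosh s)⁻¹ / 2)
        = s - 2*s*Real.sinh s/(1+2*Real.cosh s) := by
      rw [Real.tanh_eq_sinh_div_cosh]
      have hd : (0:ℝ) < 1 + (Real.cosh s)⁻¹ / 2 := by positivity
      field_simp [hc.ne', hd.ne', (aux_pos s).ne']
      ring
    rw [heq] at hmem
    exact hmem
  -- main real inequality
  have main : ∀ x : EuclideanSpace ℝ (Fin n), x ∈ Kαᶜ →
      f x / (u ^ n * f (u • x)) ≤ β ^ n * Real.exp (-(β - 1) * n) := by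
    intro x hx
    have hS : (1 + Cstar) * α * n < ∑ i, |x i| := by
      rw [hKα] at hx
      exact not_le.mp hx
    set z : Fin n → ℝ := fun i => 2 * π * x i / Real.sqrt 3 with hzdef
    have hfx : f x = (∏ i, (1 + 2 * Real.cosh (z i)))⁻¹ := by
      rw [hf, Finset.prod_inv_distrib]
    have hfu : f (u • x) = (∏ i, (1 + 2 * Real.cosh (u * z i)))⁻¹ := by
      rw [hf, Finset.prod_inv_distrib]
      congr 1
      refine Finset.prod_congr rfl fun i _ => ?_
      congr 2
      rw [PiLp.smul_apply, smul_eq_mul, hzdef]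
      ring
    set D : Fin n → ℝ := fun i => 1 + 2 * Real.cosh (z i) with hD
    set E : Fin n → ℝ := fun i => 1 + 2 * Real.cosh (u * z i) with hE
    have hDpos : ∀ i, (0:ℝ) < D i := fun i => aux_pos _
    have hEpos : ∀ i, (0:ℝ) < E i := fun i => aux_pos _
    have hPD : (0:ℝ) < ∏ i, D i := Finset.prod_pos fun i _ => hDpos i
    have hPE : (0:ℝ) < ∏ i, E i := Finset.prod_pos fun i _ => hEpos i
    have hu0 : (0:ℝ) < u := hu.1
    have hprod : f x / (u ^ n * f (u • x)) = ∏ i, E i / (u * D i) := by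
      rw [hfx, hfu, Finset.prod_div_distrib, Finset.prod_mul_distrib,
        Finset.prod_const, Finset.card_univ, Fintype.card_fin]
      field_simp
    rw [hprod]
    -- per-factor bound
    have hfac : ∀ i ∈ Finset.univ, E i / (u * D i)
        ≤ u⁻¹ * Real.exp (-(1-u) * |z i| - Cstar * Real.log u) := by
      intro i _
      have hpc := percoord Cstar hC0 hub u hu (z i)
      have hEle : E i ≤ D i * Real.exp (-(1-u) * |z i| - Cstar * Real.log u) := by
        calc E i = Real.exp (Real.log (E i)) := (Real.exp_log (hEpos i)).symm
        _ ≤ Real.exp (Real.log (D i) + (-(1-u) * |z i| - Cstar * Real.log u)) := by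
            apply Real.exp_le_exp.mpr
            simp only [hE, hD]
            linarith [hpc]
        _ = D i * Real.exp (-(1-u) * |z i| - Cstar * Real.log u) := by
            rw [Real.exp_add, Real.exp_log (hDpos i)]
      rw [div_le_iff₀ (mul_pos hu0 (hDpos i))]
      calc E i ≤ D i * Real.exp (-(1-u) * |z i| - Cstar * Real.log u) := hEle
      _ = u⁻¹ * Real.exp (-(1-u) * |z i| - Cstar * Real.log u) * (u * D i) := by
          field_simp
    have hstep : (∏ i, E i / (u * D i))
        ≤ ∏ i, u⁻¹ * Real.exp (-(1-u) * |z i| - Cstar * Real.log u) :=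
      Finset.prod_le_prod (fun i _ => by positivity) hfac
    -- compute RHS product
    set Z : ℝ := ∑ i, |z i| with hZdef
    have hrhs : (∏ i, u⁻¹ * Real.exp (-(1-u) * |z i| - Cstar * Real.log u))
        = β ^ n * Real.exp (-(1-u) * Z - n * (Cstar * Real.log u)) := by
      rw [Finset.prod_mul_distrib, Finset.prod_const, Finset.card_univ, Fintype.card_fin,
        ← Real.exp_sum, hudef, inv_inv]
      congr 1
      rw [Finset.sum_sub_distrib, ← Finset.mul_sum, Finset.sum_const, Finset.card_univ,
        Fintype.card_fin, nsmul_eq_mul]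
    -- lower bound on Z
    have hZS : Z = 2 * π / Real.sqrt 3 * ∑ i, |x i| := by
      rw [hZdef, Finset.mul_sum]
      refine Finset.sum_congr rfl fun i _ => ?_
      show |2 * π * x i / Real.sqrt 3| = _
      rw [show 2 * π * x i / Real.sqrt 3 = 2 * π / Real.sqrt 3 * x i from by ring,
        abs_mul, abs_of_pos (by positivity : (0:ℝ) < 2 * π / Real.sqrt 3)]
    have hZlb : (1 + Cstar) * n * β < Z := by
      rw [hZS]
      have hc : (0:ℝ) < 2 * π / Real.sqrt 3 := by positivity
      have := mul_lt_mul_of_pos_left hS hc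
      calc (1 + Cstar) * n * β = 2 * π / Real.sqrt 3 * ((1 + Cstar) * α * n) := by
            rw [hβdef]; field_simp
      _ < _ := this
    -- exponent inequality
    have e1 : (1 - u) * β = β - 1 := by
      rw [hudef]; field_simp
    have e2 : -(1-u) * Z ≤ -((β-1) * ((1+Cstar) * n)) := by
      have hnn : (0:ℝ) ≤ 1 - u := by
        have := hu.2; linarith
      have h := mul_le_mul_of_nonneg_left hZlb.le hnn
      have e1' : (β-1) * ((1+Cstar) * n) = (1-u) * ((1+Cstar) * n * β) := by
        rw [← e1]; ring
      linarith [h, e1']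
    have e3 : Real.log β ≤ β - 1 := Real.log_le_sub_one_of_pos hβ0
    have e4 : Real.log u = -Real.log β := by rw [hudef, Real.log_inv]
    have eexp : -(1-u) * Z - n * (Cstar * Real.log u) ≤ -(β - 1) * n := by
      rw [e4]
      have h5 : (n:ℝ) * Cstar * Real.log β ≤ (n:ℝ) * Cstar * (β - 1) :=
        mul_le_mul_of_nonneg_left e3 (by positivity)
      nlinarith [e2, h5]
    calc (∏ i, E i / (u * D i)) ≤ _ := hstep
    _ = β ^ n * Real.exp (-(1-u) * Z - n * (Cstar * Real.log u)) := hrhs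
    _ ≤ β ^ n * Real.exp (-(β - 1) * n) := by
        apply mul_le_mul_of_nonneg_left (Real.exp_le_exp.mpr eexp) (by positivity)
  -- assemble
  have step1 : nuf f Kα ≤ ⨆ x ∈ Kαᶜ, ENNReal.ofReal (f x / (u ^ n * f (u • x))) := by
    unfold nuf
    exact iInf₂_le u hu
  have step2 : (⨆ x ∈ Kαᶜ, ENNReal.ofReal (f x / (u ^ n * f (u • x))))
      ≤ ENNReal.ofReal (β ^ n * Real.exp (-(β - 1) * n)) :=
    iSup₂_le fun x hx => ENNReal.ofReal_le_ofReal (main x hx)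
  exact le_trans step1 step2
end
end

section
/- Let f(x) := ∏_{i=1}^n (1 + 2cosh(2πx_i/√3))^{−1} on ℝⁿ. Then for every x = (x₁,…,xₙ) ∈ ℝⁿ and every 0 < u ≤ 1, log f(ux) − log f(x) ≥ ((1−u)·2π/√3) · Σ_{i=1}^n x_i·tanh(2πu x_i/√3) / (1 + sech(2πu x_i/√3)/2). -/
/-!
Writing `a = 2πx/√3` coordinatewise, `-log f(x) = ∑ᵢ g(aᵢ)` with `g t = log (1 + 2 cosh t)`.
Since `g'' t = (2 cosh t + 4) / (1 + 2 cosh t)² ≥ 0`, `g` is convex, and the tangent line at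
`b = u a` gives `g a - g b ≥ g'(b) (a - b) = (1 - u) a g'(b)`, where
`g'(b) = 2 sinh b / (1 + 2 cosh b) = tanh b / (1 + sech b / 2)`.
-/

open Real Set

lemma ConvexOn.mul_sub_le_sub_of_hasDerivAt {S : Set ℝ} {f : ℝ → ℝ} {f' x y : ℝ}
    (hfc : ConvexOn ℝ S f) (hx : x ∈ S) (hy : y ∈ S) (hf : HasDerivAt f f' x) :
    f' * (y - x) ≤ f y - f x := by
  rcases lt_trichotomy x y with hxy | rfl | hyx
  · have := hfc.le_slope_of_hasDerivAt hx hy hxy hf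
    rwa [slope_def_field, le_div_iff₀ (sub_pos.2 hxy)] at this
  · simp
  · have := hfc.slope_le_of_hasDerivAt hy hx hyx hf
    rw [slope_def_field, div_le_iff₀ (sub_pos.2 hyx)] at this
    linarith

lemma one_add_two_mul_cosh_pos (t : ℝ) : 0 < 1 + 2 * cosh t := by positivity

lemma hasDerivAt_log_one_add_two_mul_cosh (t : ℝ) :
    HasDerivAt (fun s => log (1 + 2 * cosh s)) (2 * sinh t / (1 + 2 * cosh t)) t := by
  simpa [mul_comm] using (((hasDerivAt_cosh t).const_mul 2).const_add 1).log
    (one_add_two_mul_cosh_pos t).ne'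

lemma hasDerivAt_two_mul_sinh_div_one_add_two_mul_cosh (t : ℝ) :
    HasDerivAt (fun s => 2 * sinh s / (1 + 2 * cosh s))
      ((2 * cosh t + 4) / (1 + 2 * cosh t) ^ 2) t := by
  refine (((hasDerivAt_sinh t).const_mul 2).div (((hasDerivAt_cosh t).const_mul 2).const_add 1)
    (one_add_two_mul_cosh_pos t).ne').congr_deriv ?_
  congr 1
  linear_combination 4 * cosh_sq_sub_sinh_sq t

lemma convexOn_log_one_add_two_mul_cosh : ConvexOn ℝ univ (fun t => log (1 + 2 * cosh t)) := by
  refine convexOn_of_hasDerivWithinAt2_nonneg convex_univ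
    (fun t _ => (hasDerivAt_log_one_add_two_mul_cosh t).continuousAt.continuousWithinAt)
    (fun t _ => (hasDerivAt_log_one_add_two_mul_cosh t).hasDerivWithinAt)
    (fun t _ => (hasDerivAt_two_mul_sinh_div_one_add_two_mul_cosh t).hasDerivWithinAt)
    fun t _ => by positivity

lemma tanh_div_one_add_inv_cosh_div_two (t : ℝ) :
    tanh t / (1 + (cosh t)⁻¹ / 2) = 2 * sinh t / (1 + 2 * cosh t) := by
  have := (cosh_pos t).ne'
  rw [tanh_eq_sinh_div_cosh]
  field_simp
  ring

theorem stmt_13_general {n : ℕ}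
    (f : EuclideanSpace ℝ (Fin n) → ℝ)
    (hf : ∀ x, f x = ∏ i, (1 + 2 * Real.cosh (2 * π * x i / Real.sqrt 3))⁻¹)
    (x : EuclideanSpace ℝ (Fin n)) (u : ℝ) :
    Real.log (f (u • x)) - Real.log (f x) ≥
      (1 - u) * 2 * π / Real.sqrt 3 *
        ∑ i, x i * Real.tanh (2 * π * u * x i / Real.sqrt 3) /
          (1 + (Real.cosh (2 * π * u * x i / Real.sqrt 3))⁻¹ / 2) := by
  have hlog : ∀ y : EuclideanSpace ℝ (Fin n),
      log (f y) = -∑ i, log (1 + 2 * cosh (2 * π * y i / √3)) := fun y => by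
    rw [hf, log_prod fun i _ => (inv_pos.2 (one_add_two_mul_cosh_pos _)).ne']
    simp only [log_inv, Finset.sum_neg_distrib]
  rw [ge_iff_le, hlog, hlog, neg_sub_neg, ← Finset.sum_sub_distrib, Finset.mul_sum]
  refine Finset.sum_le_sum fun i _ => ?_
  have hux : 2 * π * (u • x) i / √3 = 2 * π * u * x i / √3 := by
    rw [PiLp.smul_apply, smul_eq_mul]; ring
  set a := 2 * π * x i / √3
  set b := 2 * π * u * x i / √3
  rw [hux, mul_div_assoc (x i), tanh_div_one_add_inv_cosh_div_two]
  calc (1 - u) * 2 * π / √3 * (x i * (2 * sinh b / (1 + 2 * cosh b)))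
      = 2 * sinh b / (1 + 2 * cosh b) * (a - b) := by ring
    _ ≤ log (1 + 2 * cosh a) - log (1 + 2 * cosh b) :=
      convexOn_log_one_add_two_mul_cosh.mul_sub_le_sub_of_hasDerivAt (mem_univ b) (mem_univ a)
        (hasDerivAt_log_one_add_two_mul_cosh b)

/-- A step in the proof of Lemma 1: with
`f(x) = ∏ᵢ (1 + 2cosh(2πxᵢ/√3))⁻¹`, for every `x ∈ ℝⁿ` and `0 < u ≤ 1`,
`log f(ux) − log f(x) ≥ ((1−u)2π/√3) Σᵢ xᵢ tanh(2πuxᵢ/√3)/(1 + sech(2πuxᵢ/√3)/2)`. -/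
theorem stmt_13 {n : ℕ}
    (f : EuclideanSpace ℝ (Fin n) → ℝ)
    (hf : ∀ x, f x = ∏ i, (1 + 2 * Real.cosh (2 * π * x i / Real.sqrt 3))⁻¹)
    (x : EuclideanSpace ℝ (Fin n)) (u : ℝ) (hu0 : 0 < u) (hu1 : u ≤ 1) :
    Real.log (f (u • x)) - Real.log (f x) ≥
      (1 - u) * 2 * π / Real.sqrt 3 *
        ∑ i, x i * Real.tanh (2 * π * u * x i / Real.sqrt 3) /
          (1 + (Real.cosh (2 * π * u * x i / Real.sqrt 3))⁻¹ / 2) :=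
  stmt_13_general f hf x u
end

section
/- For every real z ≥ 0, z − z·tanh(z)/(1 + sech(z)/2) ≤ 0.4248; that is, the maximum C* := max_{z≥0}( z − z·tanh(z)/(1 + sech(z)/2) ) satisfies C* ≤ 0.4248. -/
/-!
With `u = exp z` the expression equals `z (u + 2) / (u² + u + 1)`. Since `e z ≤ exp z`, it is at
most `u (u + 2) / (e (u² + u + 1))`, and the rational function `u (u + 2) / (u² + u + 1)` is
bounded by any `c` with `3 c² ≥ 4`; its maximum `2 / √3` is attained at `u = 1 + √3`.
Taking `c = 0.4248 e` gives the bound.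
-/

open Real

lemma mul_add_two_le_mul_sq_add_add_one {c : ℝ} (hc : 0 ≤ c) (h : 4 ≤ 3 * c ^ 2) (u : ℝ) :
    u * (u + 2) ≤ c * (u ^ 2 + u + 1) := by
  have hc1 : 1 ≤ c := by nlinarith
  -- `(c - 1) (c (u² + u + 1) - u (u + 2)) = ((c - 1) u + (c - 2) / 2)² + (3 c² - 4) / 4`
  nlinarith [sq_nonneg ((c - 1) * u + (c - 2) / 2)]

lemma sub_mul_tanh_div_one_add_sech_div_two (z : ℝ) :
    z - z * tanh z / (1 + (cosh z)⁻¹ / 2) = z * (exp z + 2) / (exp z ^ 2 + exp z + 1) := by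
  have hu := exp_pos z
  rw [tanh_eq_sinh_div_cosh, sinh_eq, cosh_eq, exp_neg]
  field_simp
  ring

lemma mul_exp_add_two_div_le {c : ℝ} (hc : 0 ≤ c) (h : 4 ≤ 3 * c ^ 2) (z : ℝ) :
    z * (exp z + 2) / (exp z ^ 2 + exp z + 1) ≤ c / exp 1 := by
  have hu := exp_pos z
  rw [div_le_div_iff₀ (by positivity) (exp_pos 1)]
  calc z * (exp z + 2) * exp 1 = exp 1 * z * (exp z + 2) := by ring
    _ ≤ exp z * (exp z + 2) := by gcongr; exact exp_one_mul_le_exp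
    _ ≤ c * (exp z ^ 2 + exp z + 1) := mul_add_two_le_mul_sq_add_add_one hc h _

/-- The numerical bound `C* ≤ 0.4248`: for every real `z ≥ 0`,
`z − z·tanh(z)/(1 + sech(z)/2) ≤ 0.4248`. -/
theorem stmt_14 :
    ∀ z : ℝ, 0 ≤ z → z - z * Real.tanh z / (1 + (Real.cosh z)⁻¹ / 2) ≤ 0.4248 := by
  intro z _
  have he := exp_one_gt_d9
  have hc : 4 ≤ 3 * (0.4248 * exp 1) ^ 2 := by nlinarith
  calc z - z * tanh z / (1 + (cosh z)⁻¹ / 2)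
      = z * (exp z + 2) / (exp z ^ 2 + exp z + 1) := sub_mul_tanh_div_one_add_sech_div_two z
    _ ≤ 0.4248 * exp 1 / exp 1 := mul_exp_add_two_div_le (by positivity) hc z
    _ = 0.4248 := by field_simp
end

section
/- For every real x ≥ 1/2, 1 − (1 + 1/x)^x / e ≥ 1/(10x). -/
/-- The elementary inequality used in Theorem 5: for every real `x ≥ 1/2`,
`1 − (1 + 1/x)^x / e ≥ 1/(10x)`. -/
theorem stmt_16 :
    ∀ x : ℝ, 1 / 2 ≤ x → 1 / (10 * x) ≤ 1 - (1 + 1 / x) ^ x / Real.exp 1 := by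
  intro x hx
  have hx0 : (0:ℝ) < x := by linarith
  have hy : (0:ℝ) < 1 + 1/x := by positivity
  have hy1 : (1:ℝ) < 1 + 1/x := by
    have : 0 < 1/x := by positivity
    linarith
  rw [Real.rpow_def_of_pos hy]
  have hlog : 0 < Real.log (1 + 1/x) := Real.log_pos hy1
  have hsinh : Real.log (1 + 1/x) ≤ ((1+1/x) - (1+1/x)⁻¹)/2 := by
    have h := (Real.self_le_sinh_iff.mpr hlog.le)
    rwa [Real.sinh_log hy] at h
  set s : ℝ := (2*x+1)/(2*(x+1)) with hs
  have hx1 : (0:ℝ) < x + 1 := by linarith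
  have hstep : Real.log (1 + 1/x) * x ≤ s := by
    have h1 : Real.log (1 + 1/x) * x ≤ ((1+1/x) - (1+1/x)⁻¹)/2 * x :=
      mul_le_mul_of_nonneg_right hsinh hx0.le
    have h2 : ((1+1/x) - (1+1/x)⁻¹)/2 * x = s := by
      rw [hs]
      have hinv : (1+1/x)⁻¹ = x/(x+1) := by
        rw [inv_eq_iff_eq_inv]
        field_simp
      rw [hinv]
      field_simp
      ring
    linarith [h2 ▸ h1]
  have hexp : Real.exp (Real.log (1 + 1/x) * x) ≤ Real.exp s :=
    Real.exp_le_exp.mpr hstep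
  have hs2 : s < 1 := by
    rw [hs, div_lt_one (by linarith)]
    linarith
  have h2s : 0 < 2 - s := by linarith
  have hb : Real.exp s ≤ Real.exp 1 / (2 - s) := by
    rw [le_div_iff₀ h2s]
    have h1 : (2 - s) ≤ Real.exp (1 - s) := by
      have := Real.add_one_le_exp (1 - s)
      linarith
    calc Real.exp s * (2 - s) ≤ Real.exp s * Real.exp (1-s) :=
          mul_le_mul_of_nonneg_left h1 (Real.exp_pos s).le
      _ = Real.exp 1 := by rw [← Real.exp_add]; ring_nf
  have hc : Real.exp 1 / (2 - s) ≤ Real.exp 1 * (1 - 1/(10*x)) := by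
    have h2s' : 2 - s = (2*x+3)/(2*(x+1)) := by
      rw [hs]; field_simp; ring
    have hkey : 1/(2 - s) ≤ 1 - 1/(10*x) := by
      rw [h2s', one_div, inv_div]
      have h10 : (0:ℝ) < 10*x := by linarith
      rw [div_le_iff₀ (by linarith : (0:ℝ) < 2*x+3)]
      have : 1 - 1/(10*x) = (10*x - 1)/(10*x) := by field_simp
      rw [this, div_mul_eq_mul_div, le_div_iff₀ h10]
      nlinarith
    calc Real.exp 1 / (2 - s) = Real.exp 1 * (1/(2-s)) := by ring
      _ ≤ Real.exp 1 * (1 - 1/(10*x)) :=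
          mul_le_mul_of_nonneg_left hkey (Real.exp_pos 1).le
  have hE : Real.exp (Real.log (1 + 1/x) * x) ≤ Real.exp 1 * (1 - 1/(10*x)) := by
    linarith
  have he1 : (0:ℝ) < Real.exp 1 := Real.exp_pos 1
  have : Real.exp (Real.log (1 + 1/x) * x) / Real.exp 1 ≤ 1 - 1/(10*x) := by
    rw [div_le_iff₀ he1]
    linarith [hE]
  linarith
end

section
/- For every positive integer n, (1 + 6/√n)^{n/2} · e^{−3√n} < 1/3. -/
/-- The numerical estimate in Theorem 3: for every positive integer `n`,
`(1 + 6/√n)^{n/2} · e^{−3√n} < 1/3`. -/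
theorem stmt_17 :
    ∀ n : ℕ, 0 < n →
      (1 + 6 / Real.sqrt n) ^ ((n : ℝ) / 2) * Real.exp (-3 * Real.sqrt n) < 1 / 3 := by
  intro n hn
  set s := Real.sqrt n with hsdef
  have hs1 : 1 ≤ s := by
    rw [hsdef, show (1:ℝ) = Real.sqrt 1 by simp]
    exact Real.sqrt_le_sqrt (by exact_mod_cast hn)
  have hs0 : 0 < s := lt_of_lt_of_le one_pos hs1
  have hns : (n : ℝ) = s ^ 2 := (Real.sq_sqrt (by positivity)).symm
  have hb : (0:ℝ) < 1 + 6 / s := by positivity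
  set t := Real.sqrt (1 + 6 / s) with htdef
  have ht0 : 0 < t := Real.sqrt_pos.2 hb
  have hts : t ≤ (2*s^2 + 12*s + 9) / (2*s*(s+3)) := by
    rw [htdef]
    rw [show (2*s^2 + 12*s + 9) / (2*s*(s+3)) =
        Real.sqrt (((2*s^2 + 12*s + 9) / (2*s*(s+3)))^2) from
      (Real.sqrt_sq (by positivity)).symm]
    apply Real.sqrt_le_sqrt
    have h6 : 1 + 6 / s = (s + 6) / s := by field_simp
    rw [h6, div_pow, div_le_div_iff₀ hs0 (by positivity)]
    nlinarith [hs0.le, sq_nonneg s]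
  have hlog : Real.log (1 + 6 / s) ≤ 2 * (t - 1) := by
    have h1 : (1 + 6 / s) = t ^ 2 := (Real.sq_sqrt hb.le).symm
    rw [h1, Real.log_pow]
    have := Real.log_le_sub_one_of_pos ht0
    push_cast
    linarith
  -- rewrite LHS as a single exponential
  rw [Real.rpow_def_of_pos hb, ← Real.exp_add]
  have hexp : Real.log (1 + 6 / s) * ((n:ℝ)/2) + (-3 * s) ≤ -9/8 := by
    have hlog2 : Real.log (1 + 6 / s) * ((n:ℝ)/2) ≤ (t - 1) * s^2 := by
      rw [hns]
      have h2 : (0:ℝ) ≤ s^2/2 := by positivity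
      nlinarith [hlog]
    have hkey : (t - 1) * s^2 - 3*s ≤ -9/8 := by
      have hd : (0:ℝ) < 2*s*(s+3) := by positivity
      rw [le_div_iff₀ hd] at hts
      nlinarith [sq_nonneg (s-1), sq_nonneg s, hs1, hs0]
    linarith
  calc Real.exp (Real.log (1 + 6 / s) * ((n:ℝ)/2) + (-3 * s))
      ≤ Real.exp (-9/8) := Real.exp_le_exp.2 hexp
    _ < 1/3 := by
        have h3 : (3:ℝ) < Real.exp (9/8) := by
          have h8 : (1:ℝ) + 1/8 ≤ Real.exp (1/8) := by linarith [Real.add_one_le_exp (1/8:ℝ)]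
          have he : (2.7182818283:ℝ) < Real.exp 1 := Real.exp_one_gt_d9
          have : Real.exp (9/8) = Real.exp 1 * Real.exp (1/8) := by
            rw [← Real.exp_add]; norm_num
          rw [this]
          nlinarith [Real.exp_pos (1/8 : ℝ)]
        rw [show (-9/8 : ℝ) = -(9/8) by norm_num, Real.exp_neg]
        rw [inv_lt_comm₀ (Real.exp_pos _) (by norm_num)]
        simpa using h3
end

section
/- For every positive integer n, (1 + 2π√3/√n)^n · e^{−2π√3·√n} < 1/3. Equivalently, with α := √3/(2π) + 3/√n, one has (2πα/√3)^n · e^{−(2πα/√3 − 1)n} < 1/3. -/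
/-!
Put `c = 2π√3/√n`, so that `n c² = 12π²` and `c ≤ 2π√3 ≤ 4π`. The left-hand side is
`exp (-n (c - log (1 + c)))`, and `log x ≤ 2 (√x - 1)` gives the quadratic lower bound
`c - log (1 + c) ≥ c² / (2 (c + 2))`. Hence the exponent is at most `-6π² / (c + 2)`, which is
below `-2` because `c + 2 < 3π²`; and `e² > 3`. The second form is the first one, since `2πα/√3 = 1 + c`.
-/

open Real

namespace Real

theorem sq_sub_one_div_le_sub_one_sub_log {x : ℝ} (hx : 0 < x) :
    (x - 1) ^ 2 / (2 * (x + 1)) ≤ x - 1 - log x := by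
  obtain ⟨s, hs, rfl⟩ : ∃ s, 0 < s ∧ x = s ^ 2 := ⟨√x, sqrt_pos.2 hx, (sq_sqrt hx.le).symm⟩
  have hlog : log (s ^ 2) ≤ 2 * (s - 1) := by
    rw [log_pow]
    push_cast
    linarith [log_le_sub_one_of_pos hs]
  rw [div_le_iff₀ (by positivity)]
  nlinarith [sq_nonneg (s - 1), mul_nonneg (sq_nonneg (s - 1)) (sq_nonneg (s - 1))]

theorem one_add_pow_mul_exp_neg_le {c : ℝ} (hc : -1 < c) (n : ℕ) :
    (1 + c) ^ n * exp (-(c * n)) ≤ exp (-(n * c ^ 2 / (2 * (c + 2)))) := by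
  have h1c : 0 < 1 + c := by linarith
  have hquad : c ^ 2 / (2 * (c + 2)) ≤ c - log (1 + c) := by
    convert sq_sub_one_div_le_sub_one_sub_log h1c using 2 <;> ring
  rw [← exp_log h1c, ← exp_nat_mul, ← exp_add, exp_le_exp]
  have := mul_le_mul_of_nonneg_left hquad n.cast_nonneg
  rw [mul_div_assoc]
  linarith

end Real

theorem one_add_two_pi_sqrt_three_div_pow_mul_exp_lt {n : ℕ} (hn : 0 < n) :
    (1 + 2 * π * √3 / √n) ^ n * exp (-(2 * π * √3 / √n * n)) < 1 / 3 := by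
  set c := 2 * π * √3 / √n with hc_def
  have hn1 : (1 : ℝ) ≤ n := by exact_mod_cast hn
  have hsn : 1 ≤ √(n : ℝ) := one_le_sqrt.2 hn1
  have hc : 0 < c := by positivity
  have hnc : (n : ℝ) * c ^ 2 = 12 * π ^ 2 := by
    rw [hc_def, div_pow, mul_pow, mul_pow, sq_sqrt (by positivity), sq_sqrt (by norm_num)]
    field_simp
    ring
  have hc_le : c ≤ 4 * π := by
    have h3 : √3 ≤ 2 := by rw [sqrt_le_left (by norm_num)]; norm_num
    calc c ≤ 2 * π * √3 := div_le_self (by positivity) hsn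
      _ ≤ 2 * π * 2 := by gcongr
      _ = 4 * π := by ring
  have hexponent : 2 < n * c ^ 2 / (2 * (c + 2)) := by
    rw [hnc, lt_div_iff₀ (by positivity)]
    nlinarith [pi_gt_three]
  calc (1 + c) ^ n * exp (-(c * n)) ≤ exp (-(n * c ^ 2 / (2 * (c + 2)))) :=
        one_add_pow_mul_exp_neg_le (by linarith) n
    _ < exp (-2) := exp_lt_exp.2 (by linarith)
    _ < 1 / 3 := by
        rw [exp_neg, one_div]
        gcongr
        linarith [add_one_lt_exp (two_ne_zero : (2 : ℝ) ≠ 0)]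

/-- The numerical estimate in Theorem 4: for every positive integer `n`,
`(1 + 2π√3/√n)ⁿ · e^{−2π√3·√n} < 1/3`; equivalently, with `α := √3/(2π) + 3/√n`,
`(2πα/√3)ⁿ · e^{−(2πα/√3 − 1)n} < 1/3`. -/
theorem stmt_18 :
    ∀ n : ℕ, 0 < n →
      (1 + 2 * π * Real.sqrt 3 / Real.sqrt n) ^ (n : ℕ) *
          Real.exp (-(2 * π * Real.sqrt 3) * Real.sqrt n) < 1 / 3 ∧
      (∀ α : ℝ, α = Real.sqrt 3 / (2 * π) + 3 / Real.sqrt n →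
        (2 * π * α / Real.sqrt 3) ^ (n : ℕ) *
            Real.exp (-(2 * π * α / Real.sqrt 3 - 1) * n) < 1 / 3) := by
  intro n hn
  have hsn : 0 < √(n : ℝ) := sqrt_pos.2 (by exact_mod_cast hn)
  have hbound := one_add_two_pi_sqrt_three_div_pow_mul_exp_lt hn
  have hexp : -(2 * π * √3) * √n = -(2 * π * √3 / √n * n) := by
    field_simp
    rw [sq_sqrt n.cast_nonneg]
  refine ⟨hexp ▸ hbound, fun α hα => ?_⟩
  have hα' : 2 * π * α / √3 = 1 + 2 * π * √3 / √n := by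
    rw [hα]
    field_simp
    linear_combination (-2 * π) * mul_self_sqrt (by norm_num : (0 : ℝ) ≤ 3)
  rwa [hα', add_sub_cancel_left, neg_mul]
end
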